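/- Let ℏ, m > 0, c ∈ ℂ, and let f : ℝ³ → ℂ be C¹ in a neighborhood of the origin. Define ψ : ℝ³ \ {0} → ℂ by ψ(y) = c/|y| + f(y), and the radial probability current j_r(y) = (ℏ/m) Im[ψ(y)* ∂_r ψ(y)], where ∂_r denotes the radial derivative. Then the limit of the outward probability flux through small spheres exists and equals lim_{r→0} ∫_{S²} r² j_r(rω) d²ω = (4πℏ/m) Im[c* f(0)]; in particular, the current into the boundary {r = 0} can be nonzero. -/

import Mathlib

/-!
Along a ray, `ψ(rω) = c / r + φ(r)` with `φ(r) = f(rω)`, and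
`r² Im(ψ̄ ψ') = Im(c̄ φ) + r Im(c̄ φ') + r² Im(φ̄ φ')`: the most singular term `-|c|² / r` is
real and drops out of the imaginary part. The right-hand side is jointly continuous in `(r, ω)`
up to `r = 0`, so its integral over the compact sphere is continuous in `r`, and at `r = 0` it
equals `|S²| Im(c̄ f(0)) = 4π Im(c̄ f(0))`.
-/

open Complex MeasureTheory Metric Real Filter Topology

theorem continuousAt_integral_of_continuousOn_prod {X Y E : Type*} [TopologicalSpace X]
    [FirstCountableTopology X] [LocallyCompactSpace X] [TopologicalSpace Y] [CompactSpace Y]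
    [MeasurableSpace Y] [OpensMeasurableSpace Y] [NormedAddCommGroup E] [NormedSpace ℝ E]
    [SecondCountableTopologyEither Y E] {μ : Measure Y} [IsFiniteMeasure μ]
    {g : X → Y → E} {x₀ : X} {W : Set X} (hW : W ∈ 𝓝 x₀)
    (hg : ContinuousOn (Function.uncurry g) (W ×ˢ Set.univ)) :
    ContinuousAt (fun x => ∫ y, g x y ∂μ) x₀ := by
  obtain ⟨K, hKx₀, hKW, hK⟩ := local_compact_nhds hW
  have hgK : ContinuousOn (Function.uncurry g) (K ×ˢ Set.univ) :=
    hg.mono (Set.prod_mono hKW le_rfl)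
  obtain ⟨C, hC⟩ := (hK.prod isCompact_univ).exists_bound_of_continuousOn hgK
  have hslice : ∀ x ∈ K, Continuous (g x) := fun x hx =>
    hgK.comp_continuous (.prodMk_right x) fun y => ⟨hx, Set.mem_univ y⟩
  apply continuousAt_of_dominated (bound := fun _ => C)
  · filter_upwards [hKx₀] with x hx using (hslice x hx).aestronglyMeasurable
  · filter_upwards [hKx₀] with x hx using
      .of_forall fun y => hC (x, y) ⟨hx, Set.mem_univ y⟩
  · exact integrable_const C
  · exact .of_forall fun y => (hg.continuousAt (prod_mem_nhds hW univ_mem)).comp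
      (f := fun x => (x, y)) (Continuous.prodMk_left y).continuousAt

lemma volume_toSphere_real_univ_fin_three :
    (volume : Measure (EuclideanSpace ℝ (Fin 3))).toSphere.real Set.univ = 4 * π := by
  rw [Measure.toSphere_real_apply_univ, measureReal_def, EuclideanSpace.volume_ball_fin_three]
  simp only [finrank_euclideanSpace, Fintype.card_fin, ENNReal.ofReal_one, one_pow, one_mul]
  rw [ENNReal.toReal_ofReal (by positivity)]
  push_cast
  ring

section RadialFlux

variable {E : Type*} [NormedAddCommGroup E] [NormedSpace ℝ E]

noncomputable def regularizedRadialFlux (c : ℂ) (f : E → ℂ) (r : ℝ) (v : E) : ℝ :=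
  ((starRingEnd ℂ) c * f (r • v)).im + r * ((starRingEnd ℂ) c * fderiv ℝ f (r • v) v).im
    + r ^ 2 * ((starRingEnd ℂ) (f (r • v)) * fderiv ℝ f (r • v) v).im

@[simp]
lemma regularizedRadialFlux_zero (c : ℂ) (f : E → ℂ) (v : E) :
    regularizedRadialFlux c f 0 v = ((starRingEnd ℂ) c * f 0).im := by
  simp [regularizedRadialFlux]

lemma continuousOn_regularizedRadialFlux (c : ℂ) {f : E → ℂ} {s : Set E} (hs : IsOpen s)
    (hf : ContDiffOn ℝ 1 f s) :
    ContinuousOn (fun p : ℝ × E => regularizedRadialFlux c f p.1 p.2)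
      {p | p.1 • p.2 ∈ s} := by
  have hF : ContinuousOn (fun p : ℝ × E => f (p.1 • p.2)) {p | p.1 • p.2 ∈ s} :=
    hf.continuousOn.comp (by fun_prop) fun _ hp => hp
  have hD : ContinuousOn (fun p : ℝ × E => fderiv ℝ f (p.1 • p.2) p.2) {p | p.1 • p.2 ∈ s} :=
    ContinuousOn.clm_apply ((hf.continuousOn_fderiv_of_isOpen hs le_rfl).comp
      (f := fun p : ℝ × E => p.1 • p.2) (by fun_prop) fun _ hp => hp) continuousOn_snd
  have him {g : ℝ × E → ℂ} (hg : ContinuousOn g {p | p.1 • p.2 ∈ s}) :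
      ContinuousOn (fun p => (g p).im) {p | p.1 • p.2 ∈ s} :=
    continuous_im.comp_continuousOn hg
  exact ((him (continuousOn_const.mul hF)).add
    (continuousOn_fst.mul (him (continuousOn_const.mul hD)))).add
    ((continuousOn_fst.pow 2).mul (him ((continuous_conj.comp_continuousOn hF).mul hD)))

lemma hasDerivAt_div_norm_smul_add (c : ℂ) {f : E → ℂ} {v : E} (hv : ‖v‖ = 1) {r : ℝ}
    (hr : 0 < r) (hf : DifferentiableAt ℝ f (r • v)) :
    HasDerivAt (fun s : ℝ => c / (‖s • v‖ : ℝ) + f (s • v))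
      (-c / (r : ℂ) ^ 2 + fderiv ℝ f (r • v) v) r := by
  have hnorm : (fun s : ℝ => c / (‖s • v‖ : ℝ) + f (s • v)) =ᶠ[𝓝 r]
      fun s : ℝ => c * ((s : ℂ))⁻¹ + f (s • v) := by
    filter_upwards [Ioi_mem_nhds hr] with s hs
    rw [norm_smul, hv, mul_one, Real.norm_of_nonneg hs.le, div_eq_mul_inv]
  refine HasDerivAt.congr_of_eventuallyEq ?_ hnorm
  have hinv : HasDerivAt (fun s : ℝ => c * ((s : ℂ))⁻¹) (-c / (r : ℂ) ^ 2) r := by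
    convert ((hasDerivAt_inv (ofReal_ne_zero.2 hr.ne')).const_mul c).comp_ofReal using 1
    ring
  have hsmul : HasDerivAt (fun s : ℝ => s • v) v r := by
    simpa using (hasDerivAt_id r).smul_const v
  exact hinv.add (hf.hasFDerivAt.comp_hasDerivAt r hsmul)

lemma sq_mul_im_conj_div_add_mul_neg_div_sq_add (c F D : ℂ) {r : ℝ} (hr : r ≠ 0) :
    r ^ 2 * ((starRingEnd ℂ) (c / r + F) * (-c / (r : ℂ) ^ 2 + D)).im
      = ((starRingEnd ℂ) c * F).im + r * ((starRingEnd ℂ) c * D).im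
        + r ^ 2 * ((starRingEnd ℂ) F * D).im := by
  rw [← ofReal_pow]
  simp only [mul_im, add_re, add_im, conj_re, conj_im, div_ofReal_re, div_ofReal_im, neg_re,
    neg_im]
  field_simp
  ring

lemma sq_mul_im_conj_mul_deriv_eq_regularizedRadialFlux (c : ℂ) {f : E → ℂ} {v : E}
    (hv : ‖v‖ = 1) {r : ℝ} (hr : 0 < r) (hf : DifferentiableAt ℝ f (r • v)) :
    r ^ 2 * ((starRingEnd ℂ) (c / (‖r • v‖ : ℝ) + f (r • v)) *
      deriv (fun s : ℝ => c / (‖s • v‖ : ℝ) + f (s • v)) r).im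
      = regularizedRadialFlux c f r v := by
  rw [(hasDerivAt_div_norm_smul_add c hv hr hf).deriv, norm_smul, hv, mul_one,
    Real.norm_of_nonneg hr.le, sq_mul_im_conj_div_add_mul_neg_div_sq_add _ _ _ hr.ne']
  rfl

lemma continuousOn_regularizedRadialFlux_sphere (c : ℂ) {f : E → ℂ} {ε : ℝ}
    (hf : ContDiffOn ℝ 1 f (ball 0 ε)) :
    ContinuousOn (Function.uncurry fun r (ω : sphere (0 : E) 1) => regularizedRadialFlux c f r ω)
      (ball 0 ε ×ˢ Set.univ) := by
  have hmaps : Set.MapsTo (fun p : ℝ × sphere (0 : E) 1 => (p.1, (p.2 : E)))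
      (ball 0 ε ×ˢ Set.univ) {p | p.1 • p.2 ∈ ball 0 ε} := by
    rintro ⟨r, ω⟩ ⟨hr, -⟩
    simpa [norm_smul] using hr
  exact (continuousOn_regularizedRadialFlux c isOpen_ball hf).comp
    (f := fun p : ℝ × sphere (0 : E) 1 => (p.1, (p.2 : E))) (by fun_prop) hmaps

end RadialFlux

theorem flux_into_origin_of_one_over_r_singularity
    (ℏ m : ℝ) (c : ℂ)
    (f : EuclideanSpace ℝ (Fin 3) → ℂ)
    (U : Set (EuclideanSpace ℝ (Fin 3))) (hU : U ∈ nhds (0 : EuclideanSpace ℝ (Fin 3)))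
    (hf : ContDiffOn ℝ 1 f U) :
    Filter.Tendsto
      (fun r : ℝ =>
        ∫ ω : sphere (0 : EuclideanSpace ℝ (Fin 3)) 1,
          r ^ 2 *
            ((ℏ / m) *
              ((starRingEnd ℂ) (c / (‖r • (ω : EuclideanSpace ℝ (Fin 3))‖ : ℝ)
                  + f (r • (ω : EuclideanSpace ℝ (Fin 3)))) *
                deriv (fun s : ℝ =>
                  c / (‖s • (ω : EuclideanSpace ℝ (Fin 3))‖ : ℝ)
                    + f (s • (ω : EuclideanSpace ℝ (Fin 3)))) r).im)
          ∂((volume : Measure (EuclideanSpace ℝ (Fin 3))).toSphere))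
      (nhdsWithin 0 (Set.Ioi 0))
      (nhds ((4 * π * ℏ / m) * ((starRingEnd ℂ) c * f 0).im)) := by
  obtain ⟨ε, hε, hεU⟩ := Metric.mem_nhds_iff.1 hU
  have hfε : ContDiffOn ℝ 1 f (ball 0 ε) := hf.mono hεU
  have hcont := continuousAt_integral_of_continuousOn_prod
    (μ := (volume : Measure (EuclideanSpace ℝ (Fin 3))).toSphere) (ball_mem_nhds 0 hε)
    (continuousOn_regularizedRadialFlux_sphere c hfε)
  have hlim := (hcont.tendsto.mono_left (nhdsWithin_le_nhds (s := Set.Ioi 0))).const_mul (ℏ / m)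
  simp only [regularizedRadialFlux_zero, integral_const, volume_toSphere_real_univ_fin_three,
    smul_eq_mul] at hlim
  rw [show 4 * π * ℏ / m * ((starRingEnd ℂ) c * f 0).im
    = ℏ / m * (4 * π * ((starRingEnd ℂ) c * f 0).im) by ring]
  refine hlim.congr' ?_
  filter_upwards [Ioo_mem_nhdsGT hε] with r ⟨hr0, hrε⟩
  rw [← integral_const_mul]
  refine integral_congr_ae (.of_forall fun ω => ?_)
  have hω : ‖(ω : EuclideanSpace ℝ (Fin 3))‖ = 1 := norm_eq_of_mem_sphere ω
  have hrω : r • (ω : EuclideanSpace ℝ (Fin 3)) ∈ ball 0 ε := by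
    simpa [norm_smul, hω, abs_of_pos hr0] using hrε
  dsimp only
  rw [mul_left_comm, sq_mul_im_conj_mul_deriv_eq_regularizedRadialFlux c hω hr0
    (hfε.differentiableOn one_ne_zero |>.differentiableAt (isOpen_ball.mem_nhds hrω))]
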